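/- arXiv:2107.13816 — 8 statements merged into one kernel-verified Lean document; each statement's English description precedes it below -/
import Mathlib

section
/- The independence number of the Hamming graph H(n,k) equals k^{n-1}. -/
/-- Two vertices of the Hamming graph `H(n,k)` are adjacent iff they differ
in exactly one coordinate. -/
def HAdj {n k : ℕ} (v w : Fin n → ZMod k) : Prop := ∃! i, v i ≠ w i

/-- `X n k s` is the set of vertices whose coordinate sum is `s` in `ZMod k`. -/
def X (n k : ℕ) (s : ZMod k) : Set (Fin n → ZMod k) := {v | ∑ i, v i = s}

/-- `ellN v` is the (0-based) largest index at which `v` is nonzero (0 if `v = 0`). -/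
def ellN {n k : ℕ} (v : Fin n → ZMod k) : ℕ :=
  (Finset.univ.filter (fun i => v i ≠ 0)).sup (fun i : Fin n => (i : ℕ))

/-- `Y n k s t` is the set of nonzero vertices with coordinate sum `s`
whose last nonzero coordinate equals `t`. -/
def Y (n k : ℕ) (s t : ZMod k) : Set (Fin n → ZMod k) :=
  {v | v ≠ 0 ∧ ∑ i, v i = s ∧ ∃ i : Fin n, (i : ℕ) = ellN v ∧ v i = t}

lemma sum_split {n k : ℕ} (v : Fin n → ZMod k) (i₀ : Fin n) :
    ∑ i, v i = v i₀ + ∑ i : {i : Fin n // i ≠ i₀}, v i := by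
  rw [← Finset.add_sum_erase _ _ (Finset.mem_univ i₀)]
  congr 1
  refine Finset.sum_subtype _ (fun x => ?_) v
  simp [Finset.mem_erase]

lemma card_target {n k : ℕ} (hn : 1 ≤ n) [NeZero k] (i₀ : Fin n) :
    Fintype.card ({i : Fin n // i ≠ i₀} → ZMod k) = k ^ (n - 1) := by
  rw [Fintype.card_fun, ZMod.card]
  congr 1
  simp [Fintype.card_subtype_compl]

theorem stmt4 (n k : ℕ) (hn : 1 ≤ n) (hk : 2 ≤ k) :
    IsGreatest {m : ℕ | ∃ S : Set (Fin n → ZMod k),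
      (∀ v ∈ S, ∀ w ∈ S, ¬ HAdj v w) ∧ S.ncard = m} (k ^ (n - 1)) := by
  haveI : NeZero k := ⟨by omega⟩
  set i₀ : Fin n := ⟨0, hn⟩ with hi₀
  set r : (Fin n → ZMod k) → ({i : Fin n // i ≠ i₀} → ZMod k) :=
    fun v i => v i with hr
  constructor
  · -- X n k 0 is independent of size k^(n-1)
    refine ⟨X n k 0, ?_, ?_⟩
    · rintro v hv w hw ⟨i, hi, huniq⟩
      apply hi
      have hvw : ∀ j, j ≠ i → v j = w j := fun j hj => by
        by_contra h; exact hj (huniq j h)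
      have hs : (∑ j, v j) = ∑ j, w j := by
        rw [show (∑ j, v j) = 0 from hv, show (∑ j, w j) = 0 from hw]
      rw [sum_split v i, sum_split w i] at hs
      have : (∑ j : {j : Fin n // j ≠ i}, v j) = ∑ j : {j : Fin n // j ≠ i}, w j :=
        Finset.sum_congr rfl (fun j _ => hvw j j.2)
      rw [this] at hs
      exact add_right_cancel hs
    · -- cardinality of X n k 0
      have hinj : Set.InjOn r (X n k 0) := by
        intro v hv w hw h
        have hvw : ∀ j, j ≠ i₀ → v j = w j := fun j hj => congrFun h ⟨j, hj⟩
        have hs : (∑ j, v j) = ∑ j, w j := by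
          rw [show (∑ j, v j) = 0 from hv, show (∑ j, w j) = 0 from hw]
        rw [sum_split v i₀, sum_split w i₀] at hs
        have hsum : (∑ j : {j : Fin n // j ≠ i₀}, v j) = ∑ j : {j : Fin n // j ≠ i₀}, w j :=
          Finset.sum_congr rfl (fun j _ => hvw j j.2)
        rw [hsum] at hs
        have h0 : v i₀ = w i₀ := add_right_cancel hs
        funext j
        by_cases hj : j = i₀
        · rw [hj]; exact h0
        · exact hvw j hj
      have hsurj : r '' (X n k 0) = Set.univ := by
        refine Set.eq_univ_of_forall (fun g => ?_)
        classical
        refine ⟨fun i => if h : i = i₀ then -(∑ j : {j : Fin n // j ≠ i₀}, g j)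
          else g ⟨i, h⟩, ?_, ?_⟩
        · show _ = (0 : ZMod k)
          rw [sum_split _ i₀]
          simp only [dif_pos rfl, dite_true]
          rw [neg_add_eq_zero]
          exact Finset.sum_congr rfl (fun j _ => by simp [dif_neg j.2])
        · funext i
          simp [hr, dif_neg i.2]
      have : (X n k 0).ncard = (r '' (X n k 0)).ncard :=
        (Set.ncard_image_of_injOn hinj).symm
      rw [this, hsurj, Set.ncard_univ, Nat.card_eq_fintype_card]
      exact card_target hn i₀
  · -- upper bound
    rintro m ⟨S, hS, rfl⟩
    have hinj : Set.InjOn r S := by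
      intro v hv w hw h
      by_contra hne
      refine hS v hv w hw ⟨i₀, ?_, ?_⟩
      · intro h0
        apply hne
        funext j
        by_cases hj : j = i₀
        · rw [hj]; exact h0
        · exact congrFun h ⟨j, hj⟩
      · intro j hj
        by_contra hji
        exact hj (congrFun h ⟨j, hji⟩)
    calc S.ncard = (r '' S).ncard := (Set.ncard_image_of_injOn hinj).symm
      _ ≤ (Set.univ : Set ({i : Fin n // i ≠ i₀} → ZMod k)).ncard :=
          Set.ncard_le_ncard (Set.subset_univ _) Set.finite_univ
      _ = k ^ (n - 1) := by
          rw [Set.ncard_univ, Nat.card_eq_fintype_card]; exact card_target hn i₀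
end

section
/- For s, t ∈ Z_k with t ≠ 0 and s = t, the set Y(s,t) of nonzero vertices with coordinate sum ≡ s (mod k) and last nonzero coordinate equal to t has exactly (k^{n-1}-1)/(k-1) + 1 elements. -/
open Finset Fin

namespace Fin

variable {α : Type*} [Fintype α] [DecidableEq α] {n : ℕ}

theorem card_filter_last_eq_and_init_mem (f : (Fin n → α) → α) (s : Finset (Fin n → α)) :
    #{v : Fin (n + 1) → α | v (last n) = f (init v) ∧ init v ∈ s} = #s := by
  refine card_nbij' init (fun w => snoc w (f w)) ?_ ?_ ?_ ?_
  · intro v hv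
    simp_all
  · intro w hw
    simp_all
  · intro v hv
    simp only [coe_filter, mem_univ, true_and, Set.mem_ofPred_eq] at hv
    change snoc (init v) (f (init v)) = v
    rw [← hv.1, snoc_init_self]
  · intro w _
    exact init_snoc _ _

variable {G : Type*} [AddCommGroup G] [Fintype G] [DecidableEq G]

theorem card_filter_sum_eq (g : G) (n : ℕ) :
    #{v : Fin (n + 1) → G | ∑ i, v i = g} = Fintype.card G ^ n := by
  have hsum (v : Fin (n + 1) → G) :
      ∑ i, v i = g ↔ v (last n) = g - ∑ i, init v i ∧ init v ∈ univ := by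
    simp only [sum_univ_castSucc, mem_univ, and_true, eq_sub_iff_add_eq']
    rfl
  rw [filter_congr (fun v _ => hsum v)]
  convert card_filter_last_eq_and_init_mem (fun w => g - ∑ i, w i) univ
  simp

end Fin

section LastNonzero

variable {G : Type*} [AddCommGroup G] {n : ℕ}

/-- For `t ≠ 0`: the last nonzero coordinate of `v` exists and equals `t`. -/
def LastNonzeroEq (t : G) (v : Fin n → G) : Prop :=
  ∃ j, v j = t ∧ ∀ i, j < i → v i = 0

instance [DecidableEq G] (t : G) : DecidablePred (LastNonzeroEq (n := n) t) :=
  fun v => inferInstanceAs (Decidable (∃ j, v j = t ∧ ∀ i, j < i → v i = 0))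

theorem not_lastNonzeroEq_fin_zero (t : G) (v : Fin 0 → G) : ¬LastNonzeroEq t v :=
  fun ⟨j, _⟩ => j.elim0

theorem lastNonzeroEq_iff_init {t : G} {v : Fin (n + 1) → G} :
    LastNonzeroEq t v ↔ v (last n) = t ∨ v (last n) = 0 ∧ LastNonzeroEq t (init v) := by
  constructor
  · rintro ⟨j, hj, hz⟩
    cases j using lastCases with
    | last => exact .inl hj
    | cast j =>
      exact .inr ⟨hz _ (castSucc_lt_last j), j, hj,
        fun i hi => hz _ (castSucc_lt_castSucc_iff.2 hi)⟩
  · rintro (hlast | ⟨hlast, j, hj, hz⟩)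
    · exact ⟨last n, hlast, fun i hi => absurd hi (not_lt.2 (le_last i))⟩
    · refine ⟨castSucc j, hj, fun i hi => ?_⟩
      cases i using lastCases with
      | last => exact hlast
      | cast i => exact hz i (castSucc_lt_castSucc_iff.1 hi)

variable [Fintype G] [DecidableEq G]

theorem card_lastNonzeroEq_sum_eq_succ {t : G} (ht : t ≠ 0) (s : G) :
    #{v : Fin (n + 1) → G | LastNonzeroEq t v ∧ ∑ i, v i = s} =
      #{w : Fin n → G | ∑ i, w i = s - t} + #{w : Fin n → G | LastNonzeroEq t w ∧ ∑ i, w i = s} := by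
  have hsplit (v : Fin (n + 1) → G) : LastNonzeroEq t v ∧ ∑ i, v i = s ↔
      (v (last n) = t ∧ init v ∈ ({w | ∑ i, w i = s - t} : Finset _)) ∨
      (v (last n) = 0 ∧ init v ∈ ({w | LastNonzeroEq t w ∧ ∑ i, w i = s} : Finset _)) := by
    simp only [mem_filter, mem_univ, true_and, lastNonzeroEq_iff_init, sum_univ_castSucc,
      eq_sub_iff_add_eq, init]
    constructor
    · rintro ⟨hlast | ⟨hlast, hinit⟩, hs⟩
      · exact .inl ⟨hlast, hlast ▸ hs⟩
      · exact .inr ⟨hlast, hinit, by simpa [hlast] using hs⟩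
    · rintro (⟨hlast, hs⟩ | ⟨hlast, hinit, hs⟩)
      · exact ⟨.inl hlast, hlast ▸ hs⟩
      · exact ⟨.inr ⟨hlast, hinit⟩, by simpa [hlast] using hs⟩
  rw [filter_congr (fun v _ => hsplit v), filter_or,
    card_union_of_disjoint (disjoint_filter.2 fun _ _ h₁ h₂ => ht (h₁.1.symm.trans h₂.1)),
    card_filter_last_eq_and_init_mem (fun _ => t), card_filter_last_eq_and_init_mem (fun _ => 0)]

theorem card_lastNonzeroEq_sum_eq_self {t : G} (ht : t ≠ 0) (n : ℕ) :
    #{v : Fin (n + 1) → G | LastNonzeroEq t v ∧ ∑ i, v i = t} =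
      ∑ i ∈ range n, Fintype.card G ^ i + 1 := by
  induction n with
  | zero =>
    rw [card_lastNonzeroEq_sum_eq_succ ht]
    simp [not_lastNonzeroEq_fin_zero]
  | succ n ih =>
    rw [card_lastNonzeroEq_sum_eq_succ ht, sub_self, card_filter_sum_eq, ih, sum_range_succ]
    ring

end LastNonzero

section HammingGraph

variable {n k : ℕ}

theorem le_ellN {v : Fin n → ZMod k} {i : Fin n} (hi : v i ≠ 0) : (i : ℕ) ≤ ellN v :=
  le_sup (f := fun i : Fin n => (i : ℕ)) (by simpa using hi)

theorem ellN_eq {v : Fin n → ZMod k} {j : Fin n} (hj : v j ≠ 0) (hz : ∀ i, j < i → v i = 0) :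
    ellN v = j := by
  refine le_antisymm (Finset.sup_le fun i hi => ?_) (le_ellN hj)
  by_contra! hlt
  exact (mem_filter.1 hi).2 (hz i hlt)

theorem mem_Y_iff {s t : ZMod k} (ht : t ≠ 0) {v : Fin n → ZMod k} :
    v ∈ Y n k s t ↔ LastNonzeroEq t v ∧ ∑ i, v i = s := by
  constructor
  · rintro ⟨-, hs, j, hj, hvj⟩
    refine ⟨⟨j, hvj, fun i hji => ?_⟩, hs⟩
    by_contra hi
    have := le_ellN hi
    omega
  · rintro ⟨⟨j, hvj, hz⟩, hs⟩
    have hj : v j ≠ 0 := hvj ▸ ht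
    exact ⟨fun h => hj (by simp [h]), hs, j, (ellN_eq hj hz).symm, hvj⟩

end HammingGraph

theorem stmt6 (n k : ℕ) (hn : 1 ≤ n) (hk : 2 ≤ k) (s t : ZMod k) (ht : t ≠ 0)
    (hst : s = t) : (Y n k s t).ncard = (k ^ (n - 1) - 1) / (k - 1) + 1 := by
  have : NeZero k := ⟨by omega⟩
  subst hst
  obtain ⟨m, rfl⟩ : ∃ m, n = m + 1 := ⟨n - 1, by omega⟩
  have hY : Y (m + 1) k s s =
      (({v | LastNonzeroEq s v ∧ ∑ i, v i = s} : Finset (Fin (m + 1) → ZMod k)) : Set _) :=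
    Set.ext fun v => by simp [mem_Y_iff ht]
  rw [hY, Set.ncard_coe_finset, card_lastNonzeroEq_sum_eq_self ht, ZMod.card,
    Nat.geomSum_eq hk, Nat.add_sub_cancel]
end

section
/- Let s ∈ Z_k and T ⊆ Z_k \ {0}. Then the union ⋃_{t ∈ T} Y(s,t) is an independent set in the Hamming graph H(n,k). -/
theorem stmt9 (n k : ℕ) (hn : 1 ≤ n) (hk : 2 ≤ k) (s : ZMod k)
    (T : Set (ZMod k)) (hT : 0 ∉ T) :
    ∀ v ∈ ⋃ t ∈ T, Y n k s t, ∀ w ∈ ⋃ t ∈ T, Y n k s t, ¬ HAdj v w := by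
  intro v hv w hw ⟨i, hi, huniq⟩
  simp only [Set.mem_iUnion, Y, Set.mem_setOf_eq] at hv hw
  obtain ⟨_, _, _, hvs, _⟩ := hv
  obtain ⟨_, _, _, hws, _⟩ := hw
  have hsum : ∑ j, (v j - w j) = 0 := by
    rw [Finset.sum_sub_distrib, hvs, hws, sub_self]
  rw [Finset.sum_eq_single i (fun j _ hj => by
    by_contra h
    exact hj (huniq j (fun he => h (by rw [he, sub_self]))))
    (fun h => absurd (Finset.mem_univ i) h)] at hsum
  exact hi (by linear_combination hsum)
end

section
/- Let s₁, s₂, t₁, t₂ ∈ Z_k with t₁ ≠ 0, t₂ ≠ 0, t₁ ≠ t₂. If v ∈ Y(s₁,t₁) and w ∈ Y(s₂,t₂) are adjacent in H(n,k) and ℓ(v) = ℓ(w), then s₁ - s₂ ≡ t₁ - t₂ (mod k). -/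
theorem stmt11 (n k : ℕ) (hn : 1 ≤ n) (hk : 2 ≤ k) (s₁ s₂ t₁ t₂ : ZMod k)
    (ht₁ : t₁ ≠ 0) (ht₂ : t₂ ≠ 0) (ht : t₁ ≠ t₂) (v w : Fin n → ZMod k)
    (hv : v ∈ Y n k s₁ t₁) (hw : w ∈ Y n k s₂ t₂) (hadj : HAdj v w)
    (hl : ellN v = ellN w) : s₁ - s₂ = t₁ - t₂ := by
  obtain ⟨-, hvs, i, hi, hvi⟩ := hv
  obtain ⟨-, hws, j, hj, hwj⟩ := hw
  have hij : i = j := Fin.ext (by rw [hi, hj, hl])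
  subst hij
  obtain ⟨i₀, hi₀, huniq⟩ := hadj
  have : i₀ = i := by
    by_contra hne
    have h1 : i = i₀ := huniq i (show v i ≠ w i by rw [hvi, hwj]; exact ht)
    exact hne h1.symm
  subst this
  have hall : ∀ m, m ≠ i₀ → v m = w m := by
    intro m hm
    by_contra hne
    exact hm (huniq m hne)
  rw [← hvs, ← hws, ← hvi, ← hwj]
  rw [← Finset.sum_sub_distrib]
  rw [Finset.sum_eq_single i₀]
  · intro m _ hm; rw [hall m hm]; ring
  · intro h; exact absurd (Finset.mem_univ i₀) h
end

section
/- Let s₁, s₂, t₁, t₂ ∈ Z_k with t₁ ≠ 0, t₂ ≠ 0, t₁ ≠ t₂, and s₁ - s₂ ≡ t₁ - t₂ (mod k). Then every vertex of Y(s₁,t₁) is adjacent in H(n,k) to exactly one vertex of Y(s₂,t₂). -/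
lemma ell_gt_zero {n k : ℕ} (v : Fin n → ZMod k) (p : Fin n) (h : ellN v < (p : ℕ)) :
    v p = 0 := by
  by_contra h'
  have h2 := Finset.le_sup (f := fun i : Fin n => (i : ℕ))
    (s := Finset.univ.filter (fun i => v i ≠ 0)) (b := p)
    (Finset.mem_filter.mpr ⟨Finset.mem_univ p, h'⟩)
  unfold ellN at h
  omega

lemma sum_update {n k : ℕ} (v : Fin n → ZMod k) (i : Fin n) (a : ZMod k) :
    ∑ p, Function.update v i a p = ∑ p, v p + a - v i := by
  rw [Finset.sum_update_of_mem (Finset.mem_univ i),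
    Finset.sum_sdiff_eq_sub (Finset.subset_univ _), Finset.sum_singleton]
  ring

theorem stmt13 (n k : ℕ) (hn : 1 ≤ n) (hk : 2 ≤ k) (s₁ s₂ t₁ t₂ : ZMod k)
    (ht₁ : t₁ ≠ 0) (ht₂ : t₂ ≠ 0) (ht : t₁ ≠ t₂) (hs : s₁ - s₂ = t₁ - t₂) :
    ∀ v ∈ Y n k s₁ t₁, ∃! w, w ∈ Y n k s₂ t₂ ∧ HAdj v w := by
  rintro v ⟨hv0, hvs, i, hi, hvi⟩
  have hs₂ : s₂ = s₁ - t₁ + t₂ := by linear_combination -hs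
  refine ⟨Function.update v i t₂, ⟨⟨?_, ?_, ⟨i, ?_, ?_⟩⟩, ?_⟩, ?_⟩
  · intro h
    have : Function.update v i t₂ i = 0 := by rw [h]; rfl
    simp [Function.update_self] at this
    exact ht₂ this
  · rw [sum_update, hvs, hvi, hs₂]; ring
  · -- ellN unchanged
    have : ellN (Function.update v i t₂) = ellN v := by
      unfold ellN
      congr 1
      apply Finset.filter_congr
      intro p _
      by_cases hp : p = i
      · subst hp; simp [Function.update_self, hvi, ht₁, ht₂]
      · simp [Function.update_of_ne hp]
    rw [this, hi]
  · simp [Function.update_self]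
  · -- adjacency
    refine ⟨i, ?_, ?_⟩
    · simp [Function.update_self, hvi]; exact ht
    · intro p hp
      by_contra hpi
      exact hp (by simp [Function.update_of_ne hpi])
  · -- uniqueness
    rintro w ⟨⟨hw0, hws, m, hm, hwm⟩, j, hj, hjun⟩
    have hagree : ∀ p, p ≠ j → w p = v p := by
      intro p hp
      by_contra h
      exact hp (hjun p (Ne.symm h))
    -- sum difference
    have hsum : ∑ p, w p = ∑ p, v p + (w j - v j) := by
      have : ∀ p ∈ Finset.univ, p ≠ j → w p - v p = 0 := by
        intro p _ hp; rw [hagree p hp]; ring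
      have h1 : ∑ p, (w p - v p) = w j - v j :=
        Finset.sum_eq_single_of_mem j (Finset.mem_univ j) this
      rw [Finset.sum_sub_distrib] at h1
      linear_combination h1
    have hwj : w j = v j + t₂ - t₁ := by
      rw [hws, hvs] at hsum
      linear_combination -hsum - hs
    have hvgt : ∀ p : Fin n, (i : ℕ) < (p : ℕ) → v p = 0 := by
      intro p hp; exact ell_gt_zero v p (hi ▸ hp)
    have hji : j = i := by
      rcases lt_trichotomy (j : ℕ) (i : ℕ) with h | h | h
      · -- j < i : ellN w = i, so m = i, w i = v i = t₁ ≠ t₂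
        exfalso
        have hwi : w i = t₁ := by
          rw [hagree i (fun he => by rw [he] at h; omega), hvi]
        have h1 : (i : ℕ) ≤ ellN w :=
          Finset.le_sup (f := fun p : Fin n => (p : ℕ))
            (Finset.mem_filter.mpr ⟨Finset.mem_univ i, by rw [hwi]; exact ht₁⟩)
        have h2 : ellN w ≤ (i : ℕ) := by
          apply Finset.sup_le
          intro p hp
          rcases Finset.mem_filter.mp hp with ⟨_, hp0⟩
          by_contra hc
          push_neg at hc
          have hpj : p ≠ j := fun he => by rw [he] at hc; omega
          exact hp0 (by rw [hagree p hpj]; exact hvgt p hc)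
        have hmi : m = i := Fin.ext (by omega)
        rw [hmi, hwi] at hwm
        exact ht hwm
      · exact Fin.ext h
      · -- j > i : ellN w = j, w j = t₂ - t₁ must equal t₂
        exfalso
        have hvj : v j = 0 := hvgt j h
        have hwj' : w j = t₂ - t₁ := by rw [hwj, hvj]; ring
        have hwj0 : w j ≠ 0 := by
          rw [hwj']; intro hc; exact ht (by linear_combination -hc)
        have h1 : (j : ℕ) ≤ ellN w :=
          Finset.le_sup (f := fun p : Fin n => (p : ℕ))
            (Finset.mem_filter.mpr ⟨Finset.mem_univ j, hwj0⟩)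
        have h2 : ellN w ≤ (j : ℕ) := by
          apply Finset.sup_le
          intro p hp
          rcases Finset.mem_filter.mp hp with ⟨_, hp0⟩
          by_contra hc
          push_neg at hc
          have hpj : p ≠ j := fun he => by rw [he] at hc; omega
          exact hp0 (by rw [hagree p hpj]; exact hvgt p (by omega))
        have hmj : m = j := Fin.ext (by omega)
        rw [hmj, hwj'] at hwm
        exact ht₁ (by linear_combination -hwm)
    subst hji
    funext p
    by_cases hp : p = j
    · subst hp
      rw [Function.update_self, hwj, hvi]; ring
    · rw [Function.update_of_ne hp, hagree p hp]
end

section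
/- If v ∈ Y(s₁,t₁) and w ∈ Y(s₂,t₂) are adjacent in H(n,k), where t₁, t₂ ≠ 0, t₁ ≠ t₂, s₁ - s₂ ≡ t₁ - t₂ (mod k), then ℓ(v) = ℓ(w) and w is obtained from v by replacing the ℓ(v)-th coordinate by t₂. -/
theorem stmt14 (n k : ℕ) (hn : 1 ≤ n) (hk : 2 ≤ k) (s₁ s₂ t₁ t₂ : ZMod k)
    (ht₁ : t₁ ≠ 0) (ht₂ : t₂ ≠ 0) (ht : t₁ ≠ t₂) (hs : s₁ - s₂ = t₁ - t₂)
    (v w : Fin n → ZMod k) (hv : v ∈ Y n k s₁ t₁) (hw : w ∈ Y n k s₂ t₂)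
    (hadj : HAdj v w) :
    ellN v = ellN w ∧
      ∃ i : Fin n, (i : ℕ) = ellN v ∧ w = Function.update v i t₂ := by
  obtain ⟨hv0, hvs, iv, hiv, hvt⟩ := hv
  obtain ⟨hw0, hws, iw, hiw, hwt⟩ := hw
  obtain ⟨i₀, hi₀, huniq⟩ := hadj
  have hagree : ∀ j, j ≠ i₀ → v j = w j := by
    intro j hj
    by_contra h
    exact hj (huniq j h)
  have hsum : v i₀ - w i₀ = t₁ - t₂ := by
    have h1 : ∑ i, (v i - w i) = v i₀ - w i₀ := by
      rw [Finset.sum_eq_single i₀]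
      · intro b _ hb; rw [hagree b hb]; ring
      · intro h; exact absurd (Finset.mem_univ i₀) h
    rw [Finset.sum_sub_distrib, hvs, hws, hs] at h1
    exact h1.symm
  rcases eq_or_ne iv iw with h | h
  · have hi0 : i₀ = iv := by
      by_contra hne
      have := hagree iv (fun e => hne e.symm)
      rw [hvt, h, hwt] at this
      exact ht this
    refine ⟨by rw [← hiv, ← hiw, h], iv, hiv, funext fun j => ?_⟩
    rcases eq_or_ne j iv with hj | hj
    · subst hj; rw [Function.update_self, h, hwt]
    · rw [Function.update_of_ne hj, hagree j (by rw [hi0]; exact hj)]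
  · exfalso
    have hvw : (iv : ℕ) ≠ (iw : ℕ) := fun e => h (Fin.ext e)
    rcases hvw.lt_or_gt with hlt | hlt
    · have hi0 : i₀ = iw := by
        by_contra hne
        have hvw0 : v iw ≠ 0 := by
          rw [hagree iw (fun e => hne e.symm), hwt]; exact ht₂
        have : (iw : ℕ) ≤ ellN v :=
          Finset.le_sup (Finset.mem_filter.mpr ⟨Finset.mem_univ iw, hvw0⟩)
        omega
      have hviw : v iw = 0 := by
        by_contra hvv
        have : (iw : ℕ) ≤ ellN v :=
          Finset.le_sup (Finset.mem_filter.mpr ⟨Finset.mem_univ iw, hvv⟩)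
        omega
      rw [hi0, hviw, hwt] at hsum
      apply ht₁
      have : (0 : ZMod k) - t₂ + t₂ = t₁ - t₂ + t₂ := by rw [hsum]
      simpa using this.symm
    · have hi0 : i₀ = iv := by
        by_contra hne
        have hwv0 : w iv ≠ 0 := by
          rw [← hagree iv (fun e => hne e.symm), hvt]; exact ht₁
        have : (iv : ℕ) ≤ ellN w :=
          Finset.le_sup (Finset.mem_filter.mpr ⟨Finset.mem_univ iv, hwv0⟩)
        omega
      have hwiv : w iv = 0 := by
        by_contra hvv
        have : (iv : ℕ) ≤ ellN w :=
          Finset.le_sup (Finset.mem_filter.mpr ⟨Finset.mem_univ iv, hvv⟩)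
        omega
      rw [hi0, hwiv, hvt] at hsum
      exact ht₂ (by linear_combination hsum)
end

section
/- For k ≥ 3 and n ≥ 1, the subgraph of H(n,k) induced by W = Y(1,1) ∪ (⋃_{i=2}^{k-1} Y(2,i)) has maximum degree 1, i.e., every vertex of W is adjacent to at most one other vertex of W. -/
section Aux

variable {n k : ℕ}

lemma ellN_zero_of_lt (v : Fin n → ZMod k) (j : Fin n) (h : ellN v < (j : ℕ)) : v j = 0 := by
  by_contra hj
  have : (j : ℕ) ≤ ellN v :=
    Finset.le_sup (f := fun i : Fin n => (i : ℕ)) (by simpa using hj)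
  omega

lemma ellN_eq_of (w : Fin n → ZMod k) (m : Fin n) (hm : w m ≠ 0)
    (hz : ∀ j : Fin n, (m : ℕ) < (j : ℕ) → w j = 0) : ellN w = (m : ℕ) := by
  refine le_antisymm (Finset.sup_le fun j hj => ?_)
    (Finset.le_sup (f := fun i : Fin n => (i : ℕ)) (by simpa using hm))
  simp only [Finset.mem_filter] at hj
  by_contra hle
  exact hj.2 (hz j (by omega))

/-- extraction of the useful data from membership in `W`. -/
lemma mem_W (hk : 3 ≤ k) (v : Fin n → ZMod k)
    (hv : v ∈ Y n k 1 1 ∪ ⋃ i ∈ Finset.Icc 2 (k - 1), Y n k 2 (i : ZMod k)) :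
    ∃ iv : Fin n, (iv : ℕ) = ellN v ∧
      ((∑ j, v j = 1 ∧ v iv = 1) ∨ (∑ j, v j = 2 ∧ v iv ≠ 0 ∧ v iv ≠ 1)) := by
  haveI : NeZero k := ⟨by omega⟩
  haveI : Fact (1 < k) := ⟨by omega⟩
  rcases hv with hv | hv
  · obtain ⟨-, hs, i, hi, hval⟩ := hv
    exact ⟨i, hi, Or.inl ⟨hs, hval⟩⟩
  · simp only [Set.mem_iUnion] at hv
    obtain ⟨t, ht, hv⟩ := hv
    simp only [Finset.mem_Icc] at ht
    obtain ⟨-, hs, i, hi, hval⟩ := hv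
    have htk : t < k := by omega
    have hval0 : (t : ZMod k) ≠ 0 := by
      intro h
      have := ZMod.val_natCast_of_lt htk
      rw [h, ZMod.val_zero] at this
      omega
    have hval1 : (t : ZMod k) ≠ 1 := by
      intro h
      have := ZMod.val_natCast_of_lt htk
      rw [h, ZMod.val_one] at this
      omega
    exact ⟨i, hi, Or.inr ⟨hs, hval ▸ hval0, hval ▸ hval1⟩⟩

/-- Key lemma: the unique `W`-neighbor of `v ∈ W` is fully determined by `v`. -/
lemma key (hk : 3 ≤ k) (v w : Fin n → ZMod k)
    (hv : ∃ iv : Fin n, (iv : ℕ) = ellN v ∧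
      ((∑ j, v j = 1 ∧ v iv = 1) ∨ (∑ j, v j = 2 ∧ v iv ≠ 0 ∧ v iv ≠ 1)))
    (hw : ∃ iw : Fin n, (iw : ℕ) = ellN w ∧
      ((∑ j, w j = 1 ∧ w iw = 1) ∨ (∑ j, w j = 2 ∧ w iw ≠ 0 ∧ w iw ≠ 1)))
    (i : Fin n) (hne : v i ≠ w i) (huniq : ∀ j, v j ≠ w j → j = i) :
    ∀ j : Fin n, w j =
      if (j : ℕ) = ellN v then (if ∑ x, v x = 1 then v j + 1 else v j - 1) else v j := by
  haveI : NeZero k := ⟨by omega⟩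
  haveI : Fact (1 < k) := ⟨by omega⟩
  have h12 : (1 : ZMod k) ≠ 2 := by
    have h' : ((1 : ℕ) : ZMod k) ≠ ((2 : ℕ) : ZMod k) := by
      rw [Ne, ZMod.natCast_eq_natCast_iff]
      simp only [Nat.ModEq]
      rw [Nat.mod_eq_of_lt (by omega), Nat.mod_eq_of_lt (by omega)]
      omega
    simpa using h'
  have hm11 : (1 : ZMod k) - 2 ≠ 1 := by
    intro h
    have h2 : ((2 : ℕ) : ZMod k) = ((0 : ℕ) : ZMod k) := by push_cast; linear_combination -h
    rw [ZMod.natCast_eq_natCast_iff] at h2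
    simp only [Nat.ModEq] at h2
    rw [Nat.mod_eq_of_lt (by omega), Nat.zero_mod] at h2
    omega
  obtain ⟨iv, hiv, hvcase⟩ := hv
  obtain ⟨iw, hiw, hwcase⟩ := hw
  have heq : ∀ j, j ≠ i → w j = v j := by
    intro j hj
    by_contra h
    exact hj (huniq j (Ne.symm h))
  have hsum : ∑ x, w x - ∑ x, v x = w i - v i := by
    rw [← Finset.sum_sub_distrib]
    exact Finset.sum_eq_single i
      (fun j _ hj => sub_eq_zero.mpr (heq j hj)) (fun h => absurd (Finset.mem_univ i) h)
  have hvne : v iv ≠ 0 := by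
    rcases hvcase with ⟨-, h⟩ | ⟨-, h, -⟩
    · rw [h]; exact one_ne_zero
    · exact h
  -- Step 1 : i = iv
  have hii : i = iv := by
    rcases lt_trichotomy ((i : ℕ)) ((iv : ℕ)) with h | h | h
    · -- differing index below the last nonzero index of v : contradiction
      exfalso
      have hivi : iv ≠ i := fun hc => by rw [hc] at h; omega
      have hwiv : w iv = v iv := heq iv hivi
      have hellw : ellN w = (iv : ℕ) := by
        refine ellN_eq_of w iv (by rw [hwiv]; exact hvne) (fun j hj => ?_)
        have hji : j ≠ i := fun hc => by rw [hc] at hj; omega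
        rw [heq j hji]
        exact ellN_zero_of_lt v j (by omega)
      have hiwiv : iw = iv := Fin.ext (by omega)
      rw [hiwiv, hwiv] at hwcase
      rcases hvcase with ⟨hs1, hv1⟩ | ⟨hs2, hv0, hv1⟩ <;>
        rcases hwcase with ⟨hs1', hv1'⟩ | ⟨hs2', hv0', hv1'⟩
      · rw [hs1, hs1', sub_self] at hsum
        exact hne (sub_eq_zero.mp hsum.symm).symm
      · exact hv1' (by rw [hv1])
      · exact hv1 hv1'
      · rw [hs2, hs2', sub_self] at hsum
        exact hne (sub_eq_zero.mp hsum.symm).symm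
    · exact Fin.ext h
    · -- differing index above the last nonzero index of v : contradiction
      exfalso
      have hvi : v i = 0 := ellN_zero_of_lt v i (by omega)
      have hwi : w i ≠ 0 := by rw [← hvi]; exact fun hc => hne hc.symm
      have hellw : ellN w = (i : ℕ) := by
        refine ellN_eq_of w i hwi (fun j hj => ?_)
        have hji : j ≠ i := fun hc => by rw [hc] at hj; omega
        rw [heq j hji]
        exact ellN_zero_of_lt v j (by omega)
      have hiwi : iw = i := Fin.ext (by omega)
      rw [hvi, sub_zero] at hsum
      rw [hiwi] at hwcase
      rcases hvcase with ⟨hs1, hv1⟩ | ⟨hs2, hv0, hv1⟩ <;>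
        rcases hwcase with ⟨hs1', hv1'⟩ | ⟨hs2', hv0', hv1'⟩
      · rw [hs1, hs1', sub_self] at hsum
        exact hwi hsum.symm
      · rw [hs2', hs1] at hsum
        exact hv1' (by linear_combination -hsum)
      · rw [hs1', hs2] at hsum
        exact hm11 (hsum.trans hv1')
      · rw [hs2, hs2', sub_self] at hsum
        exact hwi hsum.symm
  -- Step 2 : conclude
  intro j
  by_cases hj : (j : ℕ) = ellN v
  · have hji : j = i := Fin.ext (by omega)
    rw [if_pos hj, hji]
    rcases hvcase with ⟨hs1, -⟩ | ⟨hs2, -, -⟩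
    · rw [if_pos hs1]
      have hsw : ∑ x, w x = 2 := by
        rcases hwcase with ⟨hs1', -⟩ | ⟨hs2', -, -⟩
        · exfalso
          rw [hs1, hs1', sub_self] at hsum
          exact hne (sub_eq_zero.mp hsum.symm).symm
        · exact hs2'
      rw [hsw, hs1] at hsum
      linear_combination -hsum
    · rw [if_neg (by rw [hs2]; exact fun hc => h12 hc.symm)]
      have hsw : ∑ x, w x = 1 := by
        rcases hwcase with ⟨hs1', -⟩ | ⟨hs2', -, -⟩
        · exact hs1'
        · exfalso
          rw [hs2, hs2', sub_self] at hsum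
          exact hne (sub_eq_zero.mp hsum.symm).symm
      rw [hsw, hs2] at hsum
      linear_combination -hsum
  · rw [if_neg hj]
    exact heq j (fun hc => hj (by rw [hc, hii, hiv]))

end Aux

theorem stmt15 (n k : ℕ) (hn : 1 ≤ n) (hk : 3 ≤ k) :
    ∀ v ∈ Y n k 1 1 ∪ ⋃ i ∈ Finset.Icc 2 (k - 1), Y n k 2 (i : ZMod k),
    ∀ w₁ ∈ Y n k 1 1 ∪ ⋃ i ∈ Finset.Icc 2 (k - 1), Y n k 2 (i : ZMod k),
    ∀ w₂ ∈ Y n k 1 1 ∪ ⋃ i ∈ Finset.Icc 2 (k - 1), Y n k 2 (i : ZMod k),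
      HAdj v w₁ → HAdj v w₂ → w₁ = w₂ := by
  intro v hv w₁ hw₁ w₂ hw₂ h1 h2
  obtain ⟨i₁, hne₁, huniq₁⟩ := h1
  obtain ⟨i₂, hne₂, huniq₂⟩ := h2
  have k1 := key hk v w₁ (mem_W hk v hv) (mem_W hk w₁ hw₁) i₁ hne₁ huniq₁
  have k2 := key hk v w₂ (mem_W hk v hv) (mem_W hk w₂ hw₂) i₂ hne₂ huniq₂
  funext j
  rw [k1 j, k2 j]
end

section
/- For all n ≥ 1 and k ≥ 3, there exists a set W of k^{n-1} + 1 vertices of the Hamming graph H(n,k) such that every vertex of W is adjacent to at most one other vertex of W. -/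
/-! Take the vectors whose coordinate sum equals `prescribedSum` of their first nonzero coordinate;
`prescribedSum` only takes the values `1` and `2`. Split off the first coordinate `a`. The vectors
with `a = 0` form a copy of the same set in dimension `n - 1`. For `a ≠ 0` the vectors `(a, u)`
form the layer `∑ u = c a`, where `c a = prescribedSum a - a`; a layer contains no edges and
has `k ^ (n - 2)` elements. Because `c a ∉ {1, 2}`, no layer is adjacent to the copy. Two layers
`a ≠ b` are joined only by edges `(a, u) ~ (b, u)` with `c a = c b`, and `c` is at most
two-to-one. So every degree stays at most one, and the count is
`k ^ (n - 2) + 1 + (k - 1) k ^ (n - 2) = k ^ (n - 1) + 1`. -/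

open Finset

section Tuples

variable {M : Type*}

def firstNonzero [Zero M] [DecidableEq M] : {n : ℕ} → (Fin n → M) → M
  | 0, _ => 0
  | _ + 1, v => if v 0 = 0 then firstNonzero (Fin.tail v) else v 0

@[simp]
lemma firstNonzero_cons [Zero M] [DecidableEq M] {n : ℕ} (a : M) (u : Fin n → M) :
    firstNonzero (Fin.cons a u : Fin (n + 1) → M) = if a = 0 then firstNonzero u else a := by
  simp [firstNonzero]

lemma card_filter_eq_sum_card_filter_cons [Fintype M] {n : ℕ} (P : (Fin (n + 1) → M) → Prop)
    [DecidablePred P] : #{v | P v} = ∑ a, #{u : Fin n → M | P (Fin.cons a u)} := by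
  simp only [card_filter]
  rw [← Fintype.sum_equiv (Fin.consEquiv fun _ => M) _ _ (fun _ => rfl), Fintype.sum_prod_type]
  rfl

lemma card_filter_sum_eq_card_pow [AddCommGroup M] [Fintype M] [DecidableEq M] (m : ℕ) (c : M) :
    #{u : Fin (m + 1) → M | ∑ i, u i = c} = Fintype.card M ^ m := by
  rw [show Fintype.card M ^ m = #(univ : Finset (Fin m → M)) by simp]
  refine card_nbij' Fin.tail (fun w => Fin.cons (c - ∑ i, w i) w) (by simp) ?_ ?_
    (fun w _ => Fin.tail_cons _ _)
  · intro w _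
    simp [Fin.sum_cons]
  · intro u hu
    simp only [coe_filter, mem_univ, true_and, Set.mem_ofPred_eq] at hu
    simp [← hu, Fin.sum_univ_succ, Fin.tail]

end Tuples

section PrescribedSum

variable {R : Type*} [CommRing R] [DecidableEq R]

def prescribedSum (t : R) : R := if t = 2 ∨ t = -1 then 2 else 1

lemma prescribedSum_eq_one_or_two (t : R) : prescribedSum t = 1 ∨ prescribedSum t = 2 := by
  unfold prescribedSum
  split_ifs <;> simp

lemma prescribedSum_eq_self_iff (h2 : (2 : R) ≠ 0) {a : R} :
    prescribedSum a = a ↔ a = 1 ∨ a = 2 := by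
  refine ⟨fun h => h ▸ prescribedSum_eq_one_or_two a, ?_⟩
  rintro (rfl | rfl) <;> unfold prescribedSum
  · rw [if_neg]
    rintro (h | h)
    · exact h2 (by linear_combination -2 * h)
    · exact h2 (by linear_combination h)
  · simp

lemma prescribedSum_ne_prescribedSum_sub_self (h2 : (2 : R) ≠ 0) {t : R} (ht : t ≠ 0) (r : R) :
    prescribedSum r ≠ prescribedSum t - t := by
  have h1 : (1 : R) ≠ 0 := fun h => h2 (by linear_combination 2 * h)
  intro h
  rcases prescribedSum_eq_one_or_two r with hr | hr <;> rw [hr] at h <;>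
    unfold prescribedSum at h <;> split_ifs at h with ht'
  · rcases ht' with rfl | rfl
    · exact h1 (by linear_combination h)
    · exact h2 (by linear_combination -h)
  · exact ht (by linear_combination h)
  · rcases ht' with rfl | rfl
    · exact h2 (by linear_combination h)
    · exact h1 (by linear_combination -h)
  · exact ht' (.inr (by linear_combination h))

lemma eq_of_prescribedSum_sub_self_eq {t r₁ r₂ : R}
    (e₁ : prescribedSum r₁ - r₁ = prescribedSum t - t)
    (e₂ : prescribedSum r₂ - r₂ = prescribedSum t - t) (h₁ : r₁ ≠ t) (h₂ : r₂ ≠ t) :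
    r₁ = r₂ := by
  set c := prescribedSum t - t
  have mem : ∀ x : R, prescribedSum x - x = c → x = 1 - c ∨ x = 2 - c := fun x hx => by
    rcases prescribedSum_eq_one_or_two x with h | h
    · exact .inl (by linear_combination h - hx)
    · exact .inr (by linear_combination h - hx)
  have := mem t rfl
  have := mem r₁ e₁
  have := mem r₂ e₂
  grind

end PrescribedSum

section Hamming

variable {n k : ℕ}

lemma HAdj.sum_ne {v w : Fin n → ZMod k} (h : HAdj v w) : ∑ i, v i ≠ ∑ i, w i := by
  obtain ⟨i, hi, huniq⟩ := h
  have hdiff : ∑ j, v j - ∑ j, w j = v i - w i := by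
    rw [← sum_sub_distrib]
    exact sum_eq_single i (fun j _ hj => sub_eq_zero.mpr (by_contra fun h => hj (huniq j h)))
      (by simp)
  intro h
  rw [h, sub_self] at hdiff
  exact hi (sub_eq_zero.mp hdiff.symm)

lemma HAdj.of_cons {a b : ZMod k} {u x : Fin n → ZMod k}
    (h : HAdj (Fin.cons a u : Fin (n + 1) → ZMod k) (Fin.cons b x)) :
    (a = b ∧ HAdj u x) ∨ (a ≠ b ∧ u = x) := by
  obtain ⟨i, hi, huniq⟩ := h
  cases i using Fin.cases with
  | zero =>
    refine .inr ⟨by simpa using hi, funext fun j => by_contra fun hj => ?_⟩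
    exact Fin.succ_ne_zero j (huniq j.succ (by simpa using hj))
  | succ i =>
    refine .inl ⟨by_contra fun hab => Fin.succ_ne_zero i (huniq 0 (by simpa using hab)).symm,
      i, by simpa using hi, fun j hj => Fin.succ_injective _ (huniq j.succ (by simpa using hj))⟩

abbrev dissocSet (n k : ℕ) : Set (Fin n → ZMod k) :=
  {v | ∑ i, v i = prescribedSum (firstNonzero v)}

lemma cons_mem_dissocSet {a : ZMod k} {u : Fin n → ZMod k} :
    (Fin.cons a u : Fin (n + 1) → ZMod k) ∈ dissocSet (n + 1) k ↔
      if a = 0 then u ∈ dissocSet n k else ∑ i, u i = prescribedSum a - a := by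
  simp only [Set.mem_ofPred_eq, Fin.sum_cons, firstNonzero_cons]
  split_ifs with ha
  · simp [ha]
  · rw [eq_sub_iff_add_eq, add_comm]

lemma dissocSet_adj_cons_cases (h2 : (2 : ZMod k) ≠ 0) {a b : ZMod k} {u x : Fin n → ZMod k}
    (hv : (Fin.cons a u : Fin (n + 1) → ZMod k) ∈ dissocSet (n + 1) k)
    (hw : (Fin.cons b x : Fin (n + 1) → ZMod k) ∈ dissocSet (n + 1) k)
    (h : HAdj (Fin.cons a u : Fin (n + 1) → ZMod k) (Fin.cons b x)) :
    (a = 0 ∧ b = 0 ∧ u ∈ dissocSet n k ∧ x ∈ dissocSet n k ∧ HAdj u x) ∨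
      (a ≠ 0 ∧ b ≠ a ∧ x = u ∧ prescribedSum b - b = prescribedSum a - a) := by
  rw [cons_mem_dissocSet] at hv hw
  rcases h.of_cons with ⟨rfl, hux⟩ | ⟨hab, rfl⟩
  · by_cases ha : a = 0
    · simp only [ha, if_true] at hv hw
      exact .inl ⟨ha, ha, hv, hw, hux⟩
    · simp only [ha, if_false] at hv hw
      exact absurd (hv.trans hw.symm) hux.sum_ne
  · by_cases ha : a = 0 <;> by_cases hb : b = 0 <;>
      simp only [ha, hb, if_true, if_false] at hv hw
    · exact absurd (ha.trans hb.symm) hab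
    · exact absurd (hv.symm.trans hw) (prescribedSum_ne_prescribedSum_sub_self h2 hb _)
    · exact absurd (hw.symm.trans hv) (prescribedSum_ne_prescribedSum_sub_self h2 ha _)
    · exact .inr ⟨ha, Ne.symm hab, rfl, hw.symm.trans hv⟩

theorem dissocSet_neighbor_unique (h2 : (2 : ZMod k) ≠ 0) :
    ∀ {n : ℕ} {v w₁ w₂ : Fin n → ZMod k}, v ∈ dissocSet n k → w₁ ∈ dissocSet n k →
      w₂ ∈ dissocSet n k → HAdj v w₁ → HAdj v w₂ → w₁ = w₂
  | 0, _, _, _, _, _, _, ⟨i, _⟩, _ => i.elim0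
  | n + 1, v, w₁, w₂, hv, hw₁, hw₂, h₁, h₂ => by
    obtain ⟨a, u, rfl⟩ : ∃ a u, Fin.cons a u = v := ⟨_, _, Fin.cons_self_tail v⟩
    obtain ⟨b₁, x₁, rfl⟩ : ∃ b x, Fin.cons b x = w₁ := ⟨_, _, Fin.cons_self_tail w₁⟩
    obtain ⟨b₂, x₂, rfl⟩ : ∃ b x, Fin.cons b x = w₂ := ⟨_, _, Fin.cons_self_tail w₂⟩
    rcases dissocSet_adj_cons_cases h2 hv hw₁ h₁ with
      ⟨ha₁, rfl, hu, hx₁, hux₁⟩ | ⟨ha₁, hb₁, rfl, he₁⟩ <;>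
    rcases dissocSet_adj_cons_cases h2 hv hw₂ h₂ with
      ⟨ha₂, rfl, -, hx₂, hux₂⟩ | ⟨ha₂, hb₂, rfl, he₂⟩
    · rw [dissocSet_neighbor_unique h2 hu hx₁ hx₂ hux₁ hux₂]
    · exact absurd ha₁ ha₂
    · exact absurd ha₂ ha₁
    · rw [eq_of_prescribedSum_sub_self_eq he₁ he₂ hb₁ hb₂]

lemma card_dissocSet_one [NeZero k] (h2 : (2 : ZMod k) ≠ 0) :
    #{v : Fin 1 → ZMod k | v ∈ dissocSet 1 k} = 2 := by
  have h1 : (1 : ZMod k) ≠ 0 := fun h => h2 (by linear_combination 2 * h)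
  have hmem (a : ZMod k) (u : Fin 0 → ZMod k) :
      Fin.cons a u ∈ dissocSet 1 k ↔ a ∈ ({1, 2} : Finset (ZMod k)) := by
    rw [cons_mem_dissocSet]
    split_ifs with ha
    · simp [ha, firstNonzero, prescribedSum, h1, h1.symm, h2.symm]
    · simp [eq_comm (a := (0 : ZMod k)), sub_eq_zero, prescribedSum_eq_self_iff h2]
  have hfiber (a : ZMod k) : #{u : Fin 0 → ZMod k | Fin.cons a u ∈ dissocSet 1 k} =
      if a ∈ ({1, 2} : Finset (ZMod k)) then 1 else 0 := by
    simp only [hmem, filter_const]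
    split_ifs <;> simp
  rw [card_filter_eq_sum_card_filter_cons, Fintype.sum_congr _ _ hfiber, Fintype.sum_ite_mem,
    sum_const, smul_eq_mul, mul_one, card_pair fun h => h2 (by linear_combination -2 * h)]

lemma card_dissocSet [NeZero k] (h2 : (2 : ZMod k) ≠ 0) :
    ∀ m : ℕ, #{v : Fin (m + 1) → ZMod k | v ∈ dissocSet (m + 1) k} = k ^ m + 1
  | 0 => card_dissocSet_one h2
  | m + 1 => by
    have hfiber (a : ZMod k) : #{u | Fin.cons a u ∈ dissocSet (m + 2) k} =
        k ^ m + if a = 0 then 1 else 0 := by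
      simp_rw [cons_mem_dissocSet]
      by_cases ha : a = 0
      · simpa only [ha, if_true] using card_dissocSet h2 m
      · simpa only [ha, if_false, add_zero, ZMod.card] using
          card_filter_sum_eq_card_pow m (prescribedSum a - a)
    rw [card_filter_eq_sum_card_filter_cons, Fintype.sum_congr _ _ hfiber, sum_add_distrib,
      sum_const, card_univ, ZMod.card, Fintype.sum_ite_eq', smul_eq_mul, pow_succ, mul_comm]

end Hamming

theorem stmt16 (n k : ℕ) (hn : 1 ≤ n) (hk : 3 ≤ k) :
    ∃ W : Set (Fin n → ZMod k), W.ncard = k ^ (n - 1) + 1 ∧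
      ∀ v ∈ W, ∀ w₁ ∈ W, ∀ w₂ ∈ W, HAdj v w₁ → HAdj v w₂ → w₁ = w₂ := by
  obtain ⟨m, rfl⟩ : ∃ m, n = m + 1 := ⟨n - 1, by omega⟩
  have : NeZero k := ⟨by omega⟩
  have h2 : (2 : ZMod k) ≠ 0 := fun h => by
    have : k ∣ 2 := (ZMod.natCast_eq_zero_iff 2 k).mp (by exact_mod_cast h)
    exact absurd (Nat.le_of_dvd two_pos this) (by omega)
  refine ⟨dissocSet (m + 1) k, ?_,
    fun v hv w₁ hw₁ w₂ hw₂ => dissocSet_neighbor_unique h2 hv hw₁ hw₂⟩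
  rw [Set.ncard_eq_toFinset_card', Nat.add_sub_cancel, ← card_dissocSet h2 m,
    Set.toFinset_ofPred]
  rfl
end
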